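/- arXiv:1806.09254 — 2 statements merged into one kernel-verified Lean document; each statement's English description precedes it below -/
import Mathlib

section
/- The function g(γ) = (1+γ)²(1+γ²)/γ² on γ > 0 satisfies g(γ) ≥ 8 for all γ > 0, with equality if and only if γ = 1. Consequently, for σ > 0 and Δ > 0, the steady-state variance (σ⁴/(4Δ²))·g(γ) is minimized over γ > 0 uniquely at γ = 1, where it equals 2σ⁴/Δ². -/
lemma g_gt (γ : ℝ) (hγ : 0 < γ) (hne : γ ≠ 1) :
    8 < (1 + γ) ^ 2 * (1 + γ ^ 2) / γ ^ 2 := by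
  rw [lt_div_iff₀ (by positivity)]
  have h : (γ - 1) ^ 2 > 0 := by
    have : γ - 1 ≠ 0 := sub_ne_zero.mpr hne
    positivity
  nlinarith [sq_nonneg (γ - 1), sq_nonneg γ, mul_pos h hγ]

lemma g_ge (γ : ℝ) (hγ : 0 < γ) : 8 ≤ (1 + γ) ^ 2 * (1 + γ ^ 2) / γ ^ 2 := by
  rcases eq_or_ne γ 1 with rfl | h
  · norm_num
  · exact (g_gt γ hγ h).le

/-- `g(γ) = (1+γ)²(1+γ²)/γ² ≥ 8` for all `γ > 0`, with equality iff `γ = 1`.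
Consequently, for `σ > 0` and `Δ > 0`, the steady-state variance `(σ⁴/(4Δ²))·g(γ)`
is minimized over `γ > 0` uniquely at `γ = 1`, where it equals `2σ⁴/Δ²`. -/
theorem variance_factor_min (σ Δ : ℝ) (hσ : 0 < σ) (hΔ : 0 < Δ) :
    (∀ γ : ℝ, 0 < γ → 8 ≤ (1 + γ) ^ 2 * (1 + γ ^ 2) / γ ^ 2) ∧
      (∀ γ : ℝ, 0 < γ → ((1 + γ) ^ 2 * (1 + γ ^ 2) / γ ^ 2 = 8 ↔ γ = 1)) ∧
      (σ ^ 4 / (4 * Δ ^ 2)) * ((1 + 1) ^ 2 * (1 + 1 ^ 2) / 1 ^ 2) = 2 * σ ^ 4 / Δ ^ 2 ∧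
      (∀ γ : ℝ, 0 < γ → γ ≠ 1 →
        2 * σ ^ 4 / Δ ^ 2 < (σ ^ 4 / (4 * Δ ^ 2)) * ((1 + γ) ^ 2 * (1 + γ ^ 2) / γ ^ 2)) := by
  refine ⟨fun γ hγ => g_ge γ hγ, fun γ hγ => ?_, by field_simp; ring, fun γ hγ hne => ?_⟩
  · constructor
    · intro h
      by_contra hne
      exact absurd h (ne_of_gt (g_gt γ hγ hne))
    · rintro rfl; norm_num
  · have h := g_gt γ hγ hne
    have hc : 0 < σ ^ 4 / (4 * Δ ^ 2) := by positivity
    calc 2 * σ ^ 4 / Δ ^ 2 = (σ ^ 4 / (4 * Δ ^ 2)) * 8 := by field_simp; ring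
    _ < _ := by exact mul_lt_mul_of_pos_left h hc
end

section
/- The function g(γ) = (1+γ)²(1+γ²)/γ² is strictly decreasing on the interval (0, 1]; equivalently, the steady-state variance of lateness under conditional signal priority strictly decreases as the schedule pace T_s increases over the interval (T_c, (T_u + T_c)/2]. -/
/-- The variance factor `g(γ) = (1+γ)²(1+γ²)/γ²` is strictly decreasing on `(0, 1]`. -/
theorem variance_factor_strictAntiOn :
    StrictAntiOn (fun γ : ℝ => (1 + γ) ^ 2 * (1 + γ ^ 2) / γ ^ 2) (Set.Ioc 0 1) := by
  rintro a ⟨ha0, ha1⟩ b ⟨hb0, hb1⟩ hab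
  simp only
  rw [div_lt_div_iff₀ (by positivity) (by positivity)]
  have hab1 : a * b < 1 := by nlinarith
  have key : 0 < (b - a) * (1 - a*b) * ((a + b) * (1 + a*b) + 2*(a*b)) := by
    apply mul_pos (mul_pos (by linarith) (by linarith))
    positivity
  nlinarith [key]
end
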